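/- arXiv:2507.03686 — 2 statements merged into one kernel-verified Lean document; each statement's English description precedes it below -/
import Mathlib

section
/- Let A be a d×d real matrix with trace zero, where d ≥ 2. Then for every vector v ∈ ℝ^d, the quadratic form satisfies (Av, v) ≤ √((d−1)/d) · ‖A‖ · |v|², where ‖A‖ is the Frobenius (Hilbert–Schmidt) norm of A. -/
/-!
Write `S = |v|²`. The quadratic form is the Frobenius pairing of `A` with `v vᵀ`; since `A` is
trace-free, `v vᵀ` may be replaced by its trace-free part `v vᵀ - (S / d) I`, whose Frobenius norm
is `√(S² - S² / d) = √((d - 1) / d) S`. Cauchy–Schwarz for the Frobenius pairing finishes.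
-/

open Finset

namespace Matrix

variable {m n K : Type*} [Fintype m] [Fintype n]

theorem sum_sum_mul_le_sqrt_mul_sqrt (A B : Matrix m n ℝ) :
    ∑ i, ∑ j, A i j * B i j ≤
      √(∑ i, ∑ j, A i j ^ 2) * √(∑ i, ∑ j, B i j ^ 2) := by
  simpa only [Fintype.sum_prod_type] using
    Real.sum_mul_le_sqrt_mul_sqrt univ (fun p : m × n ↦ A p.1 p.2) (fun p ↦ B p.1 p.2)

variable [Field K]

theorem sum_sum_sq_vecMulVec_self (v : n → K) :
    ∑ i, ∑ j, vecMulVec v v i j ^ 2 = (∑ i, v i ^ 2) ^ 2 := by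
  simp only [vecMulVec_apply, mul_pow, ← mul_sum, ← sum_mul, sq (∑ i, v i ^ 2)]

variable [DecidableEq n]

def traceFreePart (M : Matrix n n K) : Matrix n n K :=
  M - (M.trace / Fintype.card n) • 1

theorem sum_sum_mul_traceFreePart {A : Matrix n n K} (hA : A.trace = 0) (M : Matrix n n K) :
    ∑ i, ∑ j, A i j * M.traceFreePart i j = ∑ i, ∑ j, A i j * M i j := by
  have hA' : ∑ i, A i i = 0 := hA
  simp only [traceFreePart, sub_apply, smul_apply, one_apply, smul_eq_mul, mul_sub,
    mul_ite, mul_one, mul_zero, sum_sub_distrib, sum_ite_eq, mem_univ, if_true,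
    ← sum_mul, hA', zero_mul, sub_zero]

theorem sum_sum_sq_traceFreePart (M : Matrix n n K) :
    ∑ i, ∑ j, M.traceFreePart i j ^ 2 =
      ∑ i, ∑ j, M i j ^ 2 - M.trace ^ 2 / Fintype.card n := by
  set c := M.trace / Fintype.card n
  have hexpand : ∀ i j, M.traceFreePart i j ^ 2 =
      M i j ^ 2 - if i = j then 2 * c * M i j - c ^ 2 else 0 := by
    intro i j
    by_cases h : i = j
    · simp only [traceFreePart, h, sub_apply, smul_apply, one_apply_eq, smul_eq_mul, mul_one,
        if_true]
      ring
    · simp [traceFreePart, h]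
  have hsq : c ^ 2 * Fintype.card n = M.trace ^ 2 / Fintype.card n := by
    rcases eq_or_ne (Fintype.card n : K) 0 with h | h
    · simp [c, h]
    · simp only [c]
      field_simp
  simp only [hexpand, sum_sub_distrib, sum_ite_eq, mem_univ, if_true, ← mul_sum, sum_const,
    card_univ, nsmul_eq_mul, mul_comm _ (c ^ 2), hsq]
  change _ - (2 * c * M.trace - _) = _
  ring

theorem sum_sum_sq_traceFreePart_vecMulVec_self [CharZero K] (v : n → K) :
    ∑ i, ∑ j, (vecMulVec v v).traceFreePart i j ^ 2 =
      ((Fintype.card n : K) - 1) / Fintype.card n * (∑ i, v i ^ 2) ^ 2 := by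
  have htrace : (vecMulVec v v).trace = ∑ i, v i ^ 2 := by
    simp only [trace_vecMulVec, dotProduct, sq]
  rw [sum_sum_sq_traceFreePart, sum_sum_sq_vecMulVec_self, htrace]
  cases isEmpty_or_nonempty n
  · simp
  · field_simp [Fintype.card_ne_zero]

end Matrix

theorem tracefree_quadratic_form_bound_general (d : ℕ)
    (A : Matrix (Fin d) (Fin d) ℝ) (hA : Matrix.trace A = 0) (v : Fin d → ℝ) :
    ∑ i, (∑ j, A i j * v j) * v i ≤
      Real.sqrt (((d : ℝ) - 1) / d) * Real.sqrt (∑ i, ∑ j, (A i j) ^ 2) *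
        (∑ i, (v i) ^ 2) := by
  have hS : 0 ≤ ∑ i, v i ^ 2 := sum_nonneg fun i _ ↦ sq_nonneg (v i)
  calc ∑ i, (∑ j, A i j * v j) * v i
      = ∑ i, ∑ j, A i j * Matrix.vecMulVec v v i j := by
        simp only [Matrix.vecMulVec_apply, sum_mul]
        exact sum_congr rfl fun i _ ↦ sum_congr rfl fun j _ ↦ by ring
    _ = ∑ i, ∑ j, A i j * (Matrix.vecMulVec v v).traceFreePart i j :=
        (Matrix.sum_sum_mul_traceFreePart hA _).symm
    _ ≤ √(∑ i, ∑ j, A i j ^ 2) * √(∑ i, ∑ j, (Matrix.vecMulVec v v).traceFreePart i j ^ 2) :=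
        Matrix.sum_sum_mul_le_sqrt_mul_sqrt _ _
    _ = Real.sqrt (((d : ℝ) - 1) / d) * Real.sqrt (∑ i, ∑ j, (A i j) ^ 2) *
        (∑ i, (v i) ^ 2) := by
        rw [Matrix.sum_sum_sq_traceFreePart_vecMulVec_self, Fintype.card_fin,
          Real.sqrt_mul' _ (sq_nonneg _), Real.sqrt_sq hS]
        ring

/-- A trace-free d×d real matrix satisfies the quadratic form bound
`(Av, v) ≤ √((d−1)/d) ‖A‖_F |v|²`, where `‖A‖_F` is the Frobenius norm. -/
theorem tracefree_quadratic_form_bound (d : ℕ) (hd : 2 ≤ d)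
    (A : Matrix (Fin d) (Fin d) ℝ) (hA : Matrix.trace A = 0) (v : Fin d → ℝ) :
    ∑ i, (∑ j, A i j * v j) * v i ≤
      Real.sqrt (((d : ℝ) - 1) / d) * Real.sqrt (∑ i, ∑ j, (A i j) ^ 2) *
        (∑ i, (v i) ^ 2) :=
  tracefree_quadratic_form_bound_general d A hA v
end

section
/- Let u ∈ Ḣ¹(ℝ^d; ℝ^d) with div u = 0 (so the Jacobian matrix ∇u(x) has zero trace at a.e. x), and let v₁,...,vₙ ∈ Ḣ¹(ℝ^d; ℝ^d). Then ∑_{i=1}^n ∫_{ℝ^d} ((v_i(x),∇)u(x), v_i(x)) dx ≤ √((d−1)/d) ∫_{ℝ^d} ρ(x) |∇u(x)| dx, where ρ(x) = ∑_{i=1}^n |v_i(x)|² and |∇u(x)| is the Frobenius norm of the Jacobian. -/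
open MeasureTheory

noncomputable section

/-- The `k`-th partial derivative of a scalar function on `ℝ^d`. -/
def pdd (d : ℕ) (f : EuclideanSpace ℝ (Fin d) → ℝ) (k : Fin d)
    (x : EuclideanSpace ℝ (Fin d)) : ℝ :=
  fderiv ℝ f x (EuclideanSpace.single k 1)

/-- Pointwise trace-free quadratic form bound. -/
lemma ptwise_tracefree {d : ℕ} (hd : 1 ≤ d) (A : Fin d → Fin d → ℝ)
    (hA : ∑ j, A j j = 0) (w : Fin d → ℝ) :
    ∑ j, (∑ k, w k * A j k) * w j ≤
      Real.sqrt (((d : ℝ) - 1) / d) * Real.sqrt (∑ j, ∑ k, (A j k) ^ 2) *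
        ∑ j, (w j) ^ 2 := by
  have hd0 : (0 : ℝ) < (d : ℝ) := by exact_mod_cast hd
  set S : ℝ := ∑ j, (w j) ^ 2 with hSdef
  have hS : 0 ≤ S := Finset.sum_nonneg fun _ _ => sq_nonneg _
  set B : Fin d → Fin d → ℝ :=
    fun j k => w j * w k - (if j = k then S / (d : ℝ) else 0) with hB
  -- the quadratic form equals ⟨A, B⟩ since A is trace free
  have key : ∑ j, (∑ k, w k * A j k) * w j = ∑ j, ∑ k, A j k * B j k := by
    have h1 : ∑ j, ∑ k, A j k * (if j = k then S / (d : ℝ) else 0)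
        = (S / (d : ℝ)) * ∑ j, A j j := by
      rw [Finset.mul_sum]
      refine Finset.sum_congr rfl fun j _ => ?_
      rw [Finset.sum_eq_single j]
      · simp [mul_comm]
      · intro k _ hk; simp [Ne.symm hk]
      · simp
    have h2 : ∀ j, (∑ k, w k * A j k) * w j = ∑ k, A j k * (w j * w k) := by
      intro j; rw [Finset.sum_mul]; refine Finset.sum_congr rfl fun k _ => ?_; ring
    simp only [hB, mul_sub, Finset.sum_sub_distrib, h1, hA, mul_zero, sub_zero]
    exact Finset.sum_congr rfl fun j _ => h2 j
  -- Frobenius norm of B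
  have hBsq : ∑ j, ∑ k, (B j k) ^ 2 = S ^ 2 * (((d : ℝ) - 1) / d) := by
    have expand : ∀ j k : Fin d, (B j k) ^ 2 = (w j)^2 * (w k)^2
        - 2 * (w j * w k) * (if j = k then S / (d : ℝ) else 0)
        + (if j = k then (S / (d : ℝ))^2 else 0) := by
      intro j k
      by_cases h : j = k <;> simp [hB, h] <;> ring
    simp only [expand, Finset.sum_add_distrib, Finset.sum_sub_distrib]
    have e1 : ∑ j : Fin d, ∑ k : Fin d, (w j)^2 * (w k)^2 = S ^ 2 := by
      simp_rw [← Finset.mul_sum, ← Finset.sum_mul, ← hSdef]; ring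
    have e2 : ∀ j : Fin d, ∑ k : Fin d,
        2 * (w j * w k) * (if j = k then S / (d : ℝ) else 0)
        = 2 * (w j)^2 * (S / (d : ℝ)) := by
      intro j
      rw [Finset.sum_eq_single j]
      · rw [if_pos rfl]; ring
      · intro k _ hk; simp [Ne.symm hk]
      · simp
    have e3 : ∀ j : Fin d, ∑ k : Fin d,
        (if j = k then (S / (d : ℝ))^2 else 0) = (S / (d : ℝ))^2 := by
      intro j
      rw [Finset.sum_eq_single j] <;> simp +contextual [eq_comm]
    simp only [e1, e2, e3, ← Finset.sum_mul, ← Finset.mul_sum, ← hSdef,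
      Finset.sum_const, Finset.card_univ, Fintype.card_fin, nsmul_eq_mul]
    field_simp
    ring
  -- Cauchy-Schwarz
  have CS : ∑ j, ∑ k, A j k * B j k ≤
      Real.sqrt (∑ j, ∑ k, (A j k) ^ 2) * Real.sqrt (∑ j, ∑ k, (B j k) ^ 2) := by
    have := Real.sum_mul_le_sqrt_mul_sqrt (Finset.univ : Finset (Fin d × Fin d))
      (fun p => A p.1 p.2) (fun p => B p.1 p.2)
    simpa only [Fintype.sum_prod_type] using this
  have hsqrtB : Real.sqrt (∑ j, ∑ k, (B j k) ^ 2)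
      = Real.sqrt (((d : ℝ) - 1) / d) * S := by
    rw [hBsq, mul_comm, Real.sqrt_mul (div_nonneg (by simp only [sub_nonneg]; exact_mod_cast hd) hd0.le), Real.sqrt_sq hS]
  calc ∑ j, (∑ k, w k * A j k) * w j = ∑ j, ∑ k, A j k * B j k := key
    _ ≤ Real.sqrt (∑ j, ∑ k, (A j k) ^ 2) * Real.sqrt (∑ j, ∑ k, (B j k) ^ 2) := CS
    _ = Real.sqrt (((d : ℝ) - 1) / d) * Real.sqrt (∑ j, ∑ k, (A j k) ^ 2) * S := by
        rw [hsqrtB]; ring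

/-- If `u ∈ Ḣ¹(ℝ^d;ℝ^d)` is divergence free (so its Jacobian is trace free
pointwise) and `v₁,…,vₙ ∈ Ḣ¹(ℝ^d;ℝ^d)`, then
`∑ᵢ ∫ ((vᵢ,∇)u, vᵢ) dx ≤ √((d−1)/d) ∫ ρ(x)|∇u(x)| dx`,
where `ρ = ∑ᵢ |vᵢ|²` and `|∇u(x)|` is the Frobenius norm of the Jacobian. -/
theorem transport_term_tracefree_bound (d n : ℕ) (hd : 2 ≤ d)
    (u : Fin d → EuclideanSpace ℝ (Fin d) → ℝ)
    (hureg : ∀ j, ContDiff ℝ 1 (u j))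
    (hdiv : ∀ x, ∑ j, pdd d (u j) j x = 0)
    (v : Fin n → Fin d → EuclideanSpace ℝ (Fin d) → ℝ)
    (hint : ∀ i, Integrable
      (fun x => ∑ j, (∑ k, v i k x * pdd d (u j) k x) * v i j x) volume)
    (hint' : Integrable (fun x => (∑ i, ∑ j, (v i j x) ^ 2) *
      Real.sqrt (∑ j, ∑ k, (pdd d (u j) k x) ^ 2)) volume) :
    ∑ i, ∫ x, ∑ j, (∑ k, v i k x * pdd d (u j) k x) * v i j x ≤
      Real.sqrt (((d : ℝ) - 1) / d) *
        ∫ x, (∑ i, ∑ j, (v i j x) ^ 2) *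
          Real.sqrt (∑ j, ∑ k, (pdd d (u j) k x) ^ 2) := by
  set c : ℝ := Real.sqrt (((d : ℝ) - 1) / d) with hc
  have hc0 : 0 ≤ c := Real.sqrt_nonneg _
  have hd1 : 1 ≤ d := le_trans (by norm_num) hd
  rw [← integral_finset_sum _ (fun i _ => hint i)]
  calc (∫ x, ∑ i, ∑ j, (∑ k, v i k x * pdd d (u j) k x) * v i j x)
      ≤ ∫ x, c * ((∑ i, ∑ j, (v i j x) ^ 2) *
          Real.sqrt (∑ j, ∑ k, (pdd d (u j) k x) ^ 2)) := by
        refine integral_mono (integrable_finset_sum _ (fun i _ => hint i))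
          (hint'.const_mul c) (fun x => ?_)
        have ptw : ∀ i, ∑ j, (∑ k, v i k x * pdd d (u j) k x) * v i j x ≤
            c * Real.sqrt (∑ j, ∑ k, (pdd d (u j) k x) ^ 2) * ∑ j, (v i j x) ^ 2 :=
          fun i => ptwise_tracefree hd1 (fun j k => pdd d (u j) k x) (hdiv x)
            (fun j => v i j x)
        calc ∑ i, ∑ j, (∑ k, v i k x * pdd d (u j) k x) * v i j x
            ≤ ∑ i, c * Real.sqrt (∑ j, ∑ k, (pdd d (u j) k x) ^ 2) *
                ∑ j, (v i j x) ^ 2 := Finset.sum_le_sum fun i _ => ptw i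
          _ = c * ((∑ i, ∑ j, (v i j x) ^ 2) *
                Real.sqrt (∑ j, ∑ k, (pdd d (u j) k x) ^ 2)) := by
              rw [← Finset.mul_sum]; ring
    _ = c * ∫ x, (∑ i, ∑ j, (v i j x) ^ 2) *
          Real.sqrt (∑ j, ∑ k, (pdd d (u j) k x) ^ 2) := integral_const_mul _ _

end
end
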